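/- Let D ≥ 1 be an integer, let u ∈ ℂ^D be a fixed (deterministic) vector, and let z be a standard complex Gaussian vector in ℂ^D. Then for every constant γ with 0 < γ < ‖u‖²/D, Pr( ‖u + z‖² < (1 + γ) D ) ≤ exp( − D (‖u‖²/D − γ)² / (2 + 4 ‖u‖²/D) ), where ‖·‖ denotes the Euclidean norm on ℂ^D. -/

import Mathlib

open scoped BigOperators NNReal
open MeasureTheory ProbabilityTheory

/-!
In real coordinates `‖u + z‖² = ∑ p, (c p + g p)²`, where `c` are the coordinates of `u` and the
`g p` are independent `N(0, 1/2)`. Completing the square,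
`E exp(-t (c + g)²) = exp(-t c² / (1 + t)) / √(1 + t)`, so the Chernoff bound gives
`Pr(‖u + z‖² ≤ (1 + γ) D) ≤ exp(D (t (1 + γ) - t μ / (1 + t) - log (1 + t)))` with `μ = ‖u‖² / D`.
As `t μ / (1 + t) ≥ t μ - t² μ` and `log (1 + t) ≥ t - t² / 2`, the exponent is at most
`D (t² (μ + 1/2) - t (μ - γ))`, whose minimum, at `t = (μ - γ) / (1 + 2 μ)`, is the claimed one.
-/

/-- `z : Ω → ℂ^D` is a standard complex Gaussian vector (`z ~ CN(0, I_D)`):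
its `2D` real coordinates (real and imaginary parts of the entries) are
independent real Gaussians with mean `0` and variance `1/2`. -/
def IsStdComplexGaussianVec {Ω : Type*} [MeasurableSpace Ω] (P : Measure Ω)
    {D : ℕ} (z : Ω → Fin D → ℂ) : Prop :=
  (∀ p : Fin D × Bool,
      Measure.map (fun ω => if p.2 then (z ω p.1).im else (z ω p.1).re) P =
        gaussianReal 0 (1/2 : ℝ≥0)) ∧
    iIndepFun
      (fun (p : Fin D × Bool) ω => if p.2 then (z ω p.1).im else (z ω p.1).re) P

open Real

lemma Real.sub_sq_div_two_le_log_one_add {t : ℝ} (ht : 0 ≤ t) :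
    t - t ^ 2 / 2 ≤ log (1 + t) := by
  refine le_trans ?_ (le_log_one_add_of_nonneg ht)
  rw [le_div_iff₀ (by linarith)]
  nlinarith [pow_nonneg ht 3]

lemma integral_exp_neg_mul_sq_gaussianReal (m : ℝ) (v : ℝ≥0) {t : ℝ} (ht : 0 ≤ t) :
    ∫ x, exp (-t * x ^ 2) ∂gaussianReal m v =
      exp (-(t * m ^ 2 / (1 + 2 * v * t))) / √(1 + 2 * v * t) := by
  rcases eq_or_ne v 0 with rfl | hv
  · simp [gaussianReal_zero_var]
  set a := 1 + 2 * v * t with ha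
  have ha0 : 0 < a := by positivity
  have hcomplete_square : ∀ x, gaussianPDFReal m v x • exp (-t * x ^ 2) =
      (√(2 * π * v))⁻¹ * exp (-(t * m ^ 2 / a)) *
        exp (-(a / (2 * v)) * (x - m / a) ^ 2) := by
    intro x
    rw [gaussianPDFReal, smul_eq_mul, mul_assoc, mul_assoc (√(2 * π * v))⁻¹, ← exp_add,
      ← exp_add, ha]
    congr 2
    field_simp
    ring
  rw [integral_gaussianReal_eq_integral_smul hv]
  simp_rw [hcomplete_square]
  rw [integral_const_mul, integral_sub_right_eq_self (fun x => exp (-(a / (2 * v)) * x ^ 2)),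
    integral_gaussian, div_div_eq_mul_div]
  rw [sqrt_div' _ ha0.le]
  field_simp

section GaussianSquares

variable {Ω : Type*} [MeasurableSpace Ω] {P : Measure Ω} {v : ℝ≥0} {t : ℝ}

lemma mgf_sq_neg_of_hasLaw_gaussianReal {X : Ω → ℝ} {m : ℝ}
    (hX : HasLaw X (gaussianReal m v) P) (ht : 0 ≤ t) :
    mgf (fun ω => X ω ^ 2) P (-t) =
      exp (-(t * m ^ 2 / (1 + 2 * v * t))) / √(1 + 2 * v * t) := by
  rw [mgf, ← integral_exp_neg_mul_sq_gaussianReal m v ht,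
    ← hX.integral_comp (f := fun x => exp (-t * x ^ 2)) (by fun_prop)]
  rfl

variable {ι : Type*} [Fintype ι] {X : ι → Ω → ℝ} {m : ι → ℝ}

lemma mgf_sum_sq_neg_of_iIndepFun_gaussianReal (hindep : iIndepFun X P)
    (hX : ∀ i, HasLaw (X i) (gaussianReal (m i) v) P) (ht : 0 ≤ t) :
    mgf (fun ω => ∑ i, X i ω ^ 2) P (-t) =
      exp (-(t * (∑ i, m i ^ 2) / (1 + 2 * v * t))) / √(1 + 2 * v * t) ^ Fintype.card ι := by
  have hsq := (hindep.comp (fun _ x => x ^ 2) fun _ => by fun_prop).mgf_sum₀ (t := -t)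
    (fun i => (hX i).aemeasurable.pow_const 2) Finset.univ
  simp only [Function.comp_def] at hsq
  rw [Finset.sum_fn] at hsq
  rw [hsq, Finset.prod_congr rfl fun i _ => mgf_sq_neg_of_hasLaw_gaussianReal (hX i) ht,
    Finset.prod_div_distrib, ← exp_sum, Finset.prod_const, Finset.card_univ, Finset.mul_sum,
    Finset.sum_div, Finset.sum_neg_distrib]

lemma measure_sum_sq_le_le_of_iIndepFun_gaussianReal (hindep : iIndepFun X P)
    (hX : ∀ i, HasLaw (X i) (gaussianReal (m i) v) P) (ht : 0 ≤ t) (a : ℝ) :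
    P {ω | ∑ i, X i ω ^ 2 ≤ a} ≤ ENNReal.ofReal (exp (t * a) *
      (exp (-(t * (∑ i, m i ^ 2) / (1 + 2 * v * t))) / √(1 + 2 * v * t) ^ Fintype.card ι)) := by
  have := hindep.isProbabilityMeasure
  have hint : Integrable (fun ω => exp (-t * ∑ i, X i ω ^ 2)) P := by
    have hXm : ∀ i, AEMeasurable (X i) P := fun i => (hX i).aemeasurable
    refine .of_bound (by fun_prop) 1 (ae_of_all _ fun ω => ?_)
    rw [norm_of_nonneg (exp_nonneg _), exp_le_one_iff]
    exact mul_nonpos_of_nonpos_of_nonneg (neg_nonpos.2 ht) (by positivity)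
  have hchernoff := measure_le_le_exp_mul_mgf a (neg_nonpos.2 ht) hint
  rw [neg_neg, mgf_sum_sq_neg_of_iIndepFun_gaussianReal hindep hX ht] at hchernoff
  rw [← ofReal_measureReal]
  exact ENNReal.ofReal_le_ofReal hchernoff

end GaussianSquares

def realCoords {ι : Type*} (w : ι → ℂ) (p : ι × Bool) : ℝ :=
  if p.2 then (w p.1).im else (w p.1).re

lemma realCoords_add {ι : Type*} (w w' : ι → ℂ) (p : ι × Bool) :
    realCoords (w + w') p = realCoords w p + realCoords w' p := by
  unfold realCoords
  split_ifs <;> simp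

lemma sum_sq_realCoords {ι : Type*} [Fintype ι] (w : ι → ℂ) :
    ∑ p, realCoords w p ^ 2 = ∑ i, ‖w i‖ ^ 2 := by
  rw [Fintype.sum_prod_type]
  refine Finset.sum_congr rfl fun i _ => ?_
  simp only [Fintype.sum_bool, realCoords, if_true, Bool.false_eq_true, if_false]
  rw [Complex.sq_norm, Complex.normSq_apply]
  ring

section LowerTailExponent

variable {μ γ t : ℝ}

lemma lowerTail_exponent_le (hμ : 0 ≤ μ) (hγ : γ < μ) (ht : t = (μ - γ) / (1 + 2 * μ)) :
    t * (1 + γ) - t * μ / (1 + t) - log (1 + t) ≤ -((μ - γ) ^ 2 / (2 + 4 * μ)) := by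
  have ht0 : 0 ≤ t := ht ▸ div_nonneg (by linarith) (by linarith)
  have hdiv : t * μ - t ^ 2 * μ ≤ t * μ / (1 + t) := by
    rw [le_div_iff₀ (by linarith)]
    nlinarith [mul_nonneg (pow_nonneg ht0 3) hμ]
  have hmin : t ^ 2 * (μ + 1 / 2) - t * (μ - γ) = -((μ - γ) ^ 2 / (2 + 4 * μ)) := by
    rw [ht]
    field_simp
    ring
  linarith [sub_sq_div_two_le_log_one_add ht0]

lemma lowerTail_chernoff_bound_le (D : ℕ) (hμ : 0 ≤ μ) (hγ : γ < μ)
    (ht : t = (μ - γ) / (1 + 2 * μ)) :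
    exp (t * ((1 + γ) * D)) * (exp (-(t * (μ * D) / (1 + t))) / (1 + t) ^ D) ≤
      exp (-(D * (μ - γ) ^ 2) / (2 + 4 * μ)) := by
  have ht0 : 0 < 1 + t := by
    have : 0 ≤ t := ht ▸ div_nonneg (by linarith) (by linarith)
    linarith
  have hpow : (1 + t) ^ D = exp (D * log (1 + t)) := by rw [exp_nat_mul, exp_log ht0]
  rw [hpow, ← exp_sub, ← exp_add, exp_le_exp]
  calc t * ((1 + γ) * D) + (-(t * (μ * D) / (1 + t)) - D * log (1 + t))
      = D * (t * (1 + γ) - t * μ / (1 + t) - log (1 + t)) := by ring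
    _ ≤ D * -((μ - γ) ^ 2 / (2 + 4 * μ)) :=
      mul_le_mul_of_nonneg_left (lowerTail_exponent_le hμ hγ ht) (Nat.cast_nonneg D)
    _ = -(D * (μ - γ) ^ 2) / (2 + 4 * μ) := by ring

end LowerTailExponent

theorem energy_detector_lower_tail
    {Ω : Type*} [MeasurableSpace Ω] (P : Measure Ω)
    (D : ℕ) (u : Fin D → ℂ) (z : Ω → Fin D → ℂ)
    (hz : IsStdComplexGaussianVec P z)
    (γ : ℝ) (hγ : γ < (∑ i, ‖u i‖ ^ 2) / D) :
    P {ω | ∑ i, ‖u i + z ω i‖ ^ 2 < (1 + γ) * D} ≤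
      ENNReal.ofReal (Real.exp (-(D * ((∑ i, ‖u i‖ ^ 2) / D - γ) ^ 2) /
        (2 + 4 * ((∑ i, ‖u i‖ ^ 2) / D)))) := by
  obtain rfl | hD := Nat.eq_zero_or_pos D
  · simp
  obtain ⟨hlaw, hindep⟩ := hz
  set μ := (∑ i, ‖u i‖ ^ 2) / D with hμ
  set t := (μ - γ) / (1 + 2 * μ) with ht
  have hμ0 : 0 ≤ μ := by positivity
  have ht0 : 0 ≤ t := div_nonneg (by linarith) (by linarith)
  have hcoord : ∀ p, HasLaw (fun ω => realCoords (z ω) p) (gaussianReal 0 (1 / 2)) P := fun p =>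
    ⟨.of_map_ne_zero (hlaw p ▸ IsProbabilityMeasure.ne_zero _), hlaw p⟩
  have hX : ∀ p, HasLaw (fun ω => realCoords u p + realCoords (z ω) p)
      (gaussianReal (realCoords u p) (1 / 2)) P := fun p => by
    simpa using gaussianReal_const_add (hcoord p) (realCoords u p)
  have hindep' := hindep.comp (fun p x => realCoords u p + x) fun _ => by fun_prop
  have hnorm : ∑ p, realCoords u p ^ 2 = μ * D := by
    rw [sum_sq_realCoords, hμ, div_mul_cancel₀ _ (by positivity)]
  calc P {ω | ∑ i, ‖u i + z ω i‖ ^ 2 < (1 + γ) * D}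
      ≤ P {ω | ∑ p, (realCoords u p + realCoords (z ω) p) ^ 2 ≤ (1 + γ) * D} :=
        measure_mono fun ω hω => by
          simpa [← realCoords_add, sum_sq_realCoords] using hω.le
    _ ≤ _ := measure_sum_sq_le_le_of_iIndepFun_gaussianReal hindep' hX ht0 _
    _ ≤ _ := by
      gcongr
      have hvar : (1 : ℝ) + 2 * ((1 / 2 : ℝ≥0) : ℝ) * t = 1 + t := by norm_num
      rw [hnorm, hvar, Fintype.card_prod, Fintype.card_fin, Fintype.card_bool, pow_mul',
        sq_sqrt (by linarith)]
      exact lowerTail_chernoff_bound_le D hμ0 hγ ht
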